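/- Suppose every Gorenstein projective Γ-module (X, Y)_φ satisfies: X is Gorenstein projective over R, Coker φ is Gorenstein projective over S, and φ is mono; and conversely. Then Tor₁^R(M, P) = 0 for every Gorenstein projective R-module P. -/

import Mathlib

open TensorProduct CategoryTheory

universe u
variable (R S M : Type) [CommRing R] [CommRing S]
  [AddCommGroup M] [Module R M] [Module S M] [SMulCommClass R S M]

/-- Modules over the triangular matrix ring Γ = [[R,0],[M,S]]: triples (X,Y,φ). -/
structure TriMod where
  X : Type
  Y : Type
  [addX : AddCommGroup X]
  [modX : Module R X]
  [addY : AddCommGroup Y]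
  [modY : Module S Y]
  phi : (M ⊗[R] X) →ₗ[S] Y

attribute [instance] TriMod.addX TriMod.modX TriMod.addY TriMod.modY

variable {R S M}

lemma lT_aux {X X' : Type} [AddCommGroup X] [Module R X] [AddCommGroup X'] [Module R X']
    (f : X →ₗ[R] X') (s : S) (t : M ⊗[R] X) :
    LinearMap.lTensor M f (s • t) = s • LinearMap.lTensor M f t := by
  induction t using TensorProduct.induction_on with
  | zero => simp
  | tmul m x => simp [TensorProduct.smul_tmul']
  | add a b ha hb => simp only [smul_add, map_add, ha, hb]

/-- `M ⊗ f` as an `S`-linear map. -/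
noncomputable def lT {X X' : Type} [AddCommGroup X] [Module R X] [AddCommGroup X'] [Module R X']
    (f : X →ₗ[R] X') : (M ⊗[R] X) →ₗ[S] (M ⊗[R] X') where
  toFun := LinearMap.lTensor M f
  map_add' := map_add _
  map_smul' s t := lT_aux f s t

@[simp] lemma lT_id {X : Type} [AddCommGroup X] [Module R X] :
    (lT (LinearMap.id : X →ₗ[R] X) : (M ⊗[R] X) →ₗ[S] (M ⊗[R] X)) = LinearMap.id := by
  apply LinearMap.ext; intro t
  simp [lT]

lemma lT_comp {X X' X'' : Type} [AddCommGroup X] [Module R X] [AddCommGroup X'] [Module R X']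
    [AddCommGroup X''] [Module R X''] (f : X →ₗ[R] X') (g : X' →ₗ[R] X'') :
    (lT (g ∘ₗ f) : (M ⊗[R] X) →ₗ[S] _) = (lT g) ∘ₗ (lT f) := by
  apply LinearMap.ext; intro t
  simp [lT, LinearMap.lTensor_comp]

@[simp] lemma lT_zero {X X' : Type} [AddCommGroup X] [Module R X] [AddCommGroup X'] [Module R X'] :
    (lT (0 : X →ₗ[R] X') : (M ⊗[R] X) →ₗ[S] (M ⊗[R] X')) = 0 := by
  apply LinearMap.ext; intro t
  simp [lT]

variable (R S M) in
@[ext] structure TriModHom (A B : TriMod R S M) where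
  f : A.X →ₗ[R] B.X
  g : A.Y →ₗ[S] B.Y
  comm : g ∘ₗ A.phi = B.phi ∘ₗ lT f

instance : Category (TriMod R S M) where
  Hom A B := TriModHom R S M A B
  id A := ⟨LinearMap.id, LinearMap.id, by simp⟩
  comp {A B C} u v := ⟨v.f ∘ₗ u.f, v.g ∘ₗ u.g, by
    rw [LinearMap.comp_assoc, u.comm, ← LinearMap.comp_assoc, v.comm, lT_comp,
      LinearMap.comp_assoc]⟩
  id_comp u := by apply TriModHom.ext <;> simp
  comp_id u := by apply TriModHom.ext <;> simp
  assoc u v w := by apply TriModHom.ext <;> simp [LinearMap.comp_assoc]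

instance instZeroHom (A B : TriMod R S M) : Zero (A ⟶ B) := ⟨⟨0, 0, by simp⟩⟩

@[simp] lemma zero_f (A B : TriMod R S M) : (0 : A ⟶ B).f = 0 := rfl
@[simp] lemma zero_g (A B : TriMod R S M) : (0 : A ⟶ B).g = 0 := rfl
@[simp] lemma comp_f {A B C : TriMod R S M} (u : A ⟶ B) (v : B ⟶ C) :
    (u ≫ v).f = v.f ∘ₗ u.f := rfl
@[simp] lemma comp_g {A B C : TriMod R S M} (u : A ⟶ B) (v : B ⟶ C) :
    (u ≫ v).g = v.g ∘ₗ u.g := rfl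
@[simp] lemma id_f (A : TriMod R S M) : TriModHom.f (𝟙 A) = LinearMap.id := rfl
@[simp] lemma id_g (A : TriMod R S M) : TriModHom.g (𝟙 A) = LinearMap.id := rfl

instance : Limits.HasZeroMorphisms (TriMod R S M) where
  comp_zero u C := by apply TriModHom.ext <;> simp
  zero_comp A {B C} u := by apply TriModHom.ext <;> simp
section Generic
open CategoryTheory Limits
variable {C : Type u} [Category.{v} C] [Limits.HasZeroMorphisms C]

/-- A complex of projectives is totally acyclic if it is acyclic and stays acyclic
under `Hom(-, P)` for every projective `P`. -/
def IsTotallyAcyclic (E : ChainComplex C ℤ) : Prop :=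
  (∀ i, Projective (E.X i)) ∧ (∀ i, E.ExactAt i) ∧
  ∀ (P : C), Projective P → ∀ (i : ℤ) (g : E.X i ⟶ P), E.d (i + 1) i ≫ g = 0 →
    ∃ h : E.X (i - 1) ⟶ P, E.d i (i - 1) ≫ h = g

/-- A complex of injectives is totally acyclic if it is acyclic and stays acyclic
under `Hom(I, -)` for every injective `I`. -/
def IsInjTotallyAcyclic (E : ChainComplex C ℤ) : Prop :=
  (∀ i, Injective (E.X i)) ∧ (∀ i, E.ExactAt i) ∧
  ∀ (I : C), Injective I → ∀ (i : ℤ) (g : I ⟶ E.X i), g ≫ E.d i (i - 1) = 0 →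
    ∃ h : I ⟶ E.X (i + 1), h ≫ E.d (i + 1) i = g

/-- An object is Gorenstein projective if it is a syzygy (a kernel of a differential)
of a totally acyclic complex of projectives. -/
def IsGorensteinProjective (G : C) : Prop :=
  ∃ (E : ChainComplex C ℤ), IsTotallyAcyclic E ∧
    ∃ (ι : G ⟶ E.X 0) (w : ι ≫ E.d 0 (-1) = 0),
      Nonempty (IsLimit (KernelFork.ofι ι w))

/-- An object is Gorenstein injective if it is a cosyzygy (a cokernel of a differential)
of a totally acyclic complex of injectives. -/
def IsGorensteinInjective (G : C) : Prop :=
  ∃ (E : ChainComplex C ℤ), IsInjTotallyAcyclic E ∧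
    ∃ (π : E.X 0 ⟶ G) (w : E.d 1 0 ≫ π = 0),
      Nonempty (IsColimit (CokernelCofork.ofπ π w))

end Generic

/-- `Ext¹_A(P, N) = 0`, phrased as: every extension of `P` by `N` splits. -/
def Ext1Vanishes (A : Type) [Ring A] (P N : Type) [AddCommGroup P] [Module A P]
    [AddCommGroup N] [Module A N] : Prop :=
  ∀ (D : Type) [AddCommGroup D] [Module A D] (i : N →ₗ[A] D) (p : D →ₗ[A] P),
    Function.Injective i → Function.Surjective p → Function.Exact i p →
    ∃ s : P →ₗ[A] D, p ∘ₗ s = LinearMap.id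

/-- A module is Gorenstein projective. -/
def ModGorensteinProjective (A : Type) [Ring A] (N : Type) [AddCommGroup N] [Module A N] :
    Prop := IsGorensteinProjective (ModuleCat.of A N)

/-- A module is Gorenstein injective. -/
def ModGorensteinInjective (A : Type) [Ring A] (N : Type) [AddCommGroup N] [Module A N] :
    Prop := IsGorensteinInjective (ModuleCat.of A N)
section Constructions
open CategoryTheory Limits
variable {R S M : Type} [CommRing R] [CommRing S]
  [AddCommGroup M] [Module R M] [Module S M] [SMulCommClass R S M]

variable (R S M) in
/-- The Γ-module `e¹_λ(X) = (X, M ⊗ X)_1`. -/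
noncomputable def e1obj (X : Type) [AddCommGroup X] [Module R X] : TriMod R S M :=
  ⟨X, M ⊗[R] X, LinearMap.id⟩

variable (R S M) in
/-- The Γ-module `e²_λ(Y) = (0, Y)_0`. -/
noncomputable def e2obj (Y : Type) [AddCommGroup Y] [Module S Y] : TriMod R S M :=
  ⟨PUnit, Y, 0⟩

variable (S M) in
/-- The complex `M ⊗[R] E` of `S`-modules obtained from a complex `E` of `R`-modules. -/
noncomputable def tensorComplex (E : ChainComplex (ModuleCat R) ℤ) :
    ChainComplex (ModuleCat S) ℤ where
  X i := ModuleCat.of S (M ⊗[R] E.X i)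
  d i j := ModuleCat.ofHom (lT (E.d i j).hom)
  shape i j h := by
    have h0 : E.d i j = 0 := E.shape i j h
    apply ModuleCat.hom_ext
    rw [h0, ModuleCat.hom_ofHom, ModuleCat.hom_zero, lT_zero, ModuleCat.hom_zero]
  d_comp_d' i j k _ _ := by
    have h0 : ((E.d j k).hom ∘ₗ (E.d i j).hom) = 0 := by
      rw [← ModuleCat.hom_comp, E.d_comp_d i j k]; rfl
    apply ModuleCat.hom_ext
    rw [ModuleCat.hom_comp, ModuleCat.hom_ofHom, ModuleCat.hom_ofHom, ← lT_comp, h0, lT_zero,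
      ModuleCat.hom_zero]

variable (R S M) in
/-- Condition (1): `M ⊗[R] -` takes acyclic complexes of projective `R`-modules to
acyclic complexes of `S`-modules. -/
def Cond1 : Prop :=
  ∀ (E : ChainComplex (ModuleCat R) ℤ),
    (∀ i, Module.Projective R (E.X i)) → (∀ i, E.ExactAt i) →
    ∀ i, (tensorComplex S M E).ExactAt i

variable (S M) in
/-- `N` lies in `Add(M)`: it is a direct summand of a direct sum of copies of `M`. -/
def MemAdd (N : Type) [AddCommGroup N] [Module S N] : Prop :=
  ∃ (I : Type) (ι : N →ₗ[S] (I →₀ M)) (p : (I →₀ M) →ₗ[S] N), p ∘ₗ ι = LinearMap.id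

variable (R S M) in
/-- Condition (2): `Add(M) ⊆ GProj(S)ᗮ`. -/
def Cond2 : Prop :=
  ∀ (N : Type) [AddCommGroup N] [Module S N], MemAdd S M N →
    ∀ (G : Type) [AddCommGroup G] [Module S G],
      ModGorensteinProjective S G → Ext1Vanishes S G N

end Constructions
section MoreConstructions
open CategoryTheory Limits
variable {R S M : Type} [CommRing R] [CommRing S]
  [AddCommGroup M] [Module R M] [Module S M] [SMulCommClass R S M]

variable (R S M) in
/-- Termwise application of `e¹_λ` to a complex of `R`-modules. -/
noncomputable def e1c (E : ChainComplex (ModuleCat R) ℤ) : ChainComplex (TriMod R S M) ℤ where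
  X i := e1obj R S M (E.X i)
  d i j := ⟨(E.d i j).hom, lT (E.d i j).hom, by
    show lT (E.d i j).hom ∘ₗ LinearMap.id = LinearMap.id ∘ₗ _
    simp; rfl⟩
  shape i j h := by
    have h0 : (E.d i j).hom = 0 := by rw [E.shape i j h]; rfl
    apply TriModHom.ext <;> simp [h0] <;> rfl
  d_comp_d' i j k _ _ := by
    have h0 : ((E.d j k).hom ∘ₗ (E.d i j).hom) = 0 := by
      rw [← ModuleCat.hom_comp, E.d_comp_d i j k]; rfl
    apply TriModHom.ext <;> dsimp only [comp_f, comp_g]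
    · exact h0
    · show lT (E.d j k).hom ∘ₗ lT (E.d i j).hom = _
      rw [← lT_comp, h0, lT_zero]; rfl

variable (R S M) in
/-- Termwise application of `e²_λ` to a complex of `S`-modules. -/
noncomputable def e2c (E : ChainComplex (ModuleCat S) ℤ) : ChainComplex (TriMod R S M) ℤ where
  X i := e2obj R S M (E.X i)
  d i j := ⟨0, (E.d i j).hom, by
    show (E.d i j).hom ∘ₗ (0 : (M ⊗[R] PUnit) →ₗ[S] _) = _
    simp; rfl⟩
  shape i j h := by
    have h0 : (E.d i j).hom = 0 := by rw [E.shape i j h]; rfl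
    apply TriModHom.ext <;> simp [h0] <;> rfl
  d_comp_d' i j k _ _ := by
    have h0 : ((E.d j k).hom ∘ₗ (E.d i j).hom) = 0 := by
      rw [← ModuleCat.hom_comp, E.d_comp_d i j k]; rfl
    apply TriModHom.ext <;> dsimp only [comp_f, comp_g]
    · simp
    · exact h0

variable (R S M) in
/-- The complex of first components of a complex of Γ-modules. -/
noncomputable def compA (E : ChainComplex (TriMod R S M) ℤ) : ChainComplex (ModuleCat R) ℤ where
  X i := ModuleCat.of R (E.X i).X
  d i j := ModuleCat.ofHom (E.d i j).f
  shape i j h := by rw [E.shape i j h]; rfl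
  d_comp_d' i j k _ _ := by
    have h0 := congrArg TriModHom.f (E.d_comp_d i j k)
    simp only [comp_f, zero_f] at h0
    apply ModuleCat.hom_ext
    exact h0

lemma range_le_comap {A B : TriMod R S M} (u : A ⟶ B) :
    LinearMap.range A.phi ≤ (LinearMap.range B.phi).comap u.g := by
  rintro y ⟨t, rfl⟩
  exact ⟨lT u.f t, (LinearMap.congr_fun u.comm t).symm⟩

variable (R S M) in
/-- The complex `Coker E` of the cokernels of the structure maps of a complex of
Γ-modules. -/
noncomputable def cokerC (E : ChainComplex (TriMod R S M) ℤ) : ChainComplex (ModuleCat S) ℤ where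
  X i := ModuleCat.of S ((E.X i).Y ⧸ LinearMap.range (E.X i).phi)
  d i j := ModuleCat.ofHom (Submodule.mapQ _ _ (E.d i j).g (range_le_comap (E.d i j)))
  shape i j h := by
    apply ModuleCat.hom_ext
    apply LinearMap.ext; intro x
    obtain ⟨y, rfl⟩ := Submodule.Quotient.mk_surjective _ x
    dsimp only
    rw [ModuleCat.hom_ofHom, Submodule.mapQ_apply, E.shape i j h]
    rfl
  d_comp_d' i j k _ _ := by
    apply ModuleCat.hom_ext
    apply LinearMap.ext; intro x
    obtain ⟨y, rfl⟩ := Submodule.Quotient.mk_surjective _ x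
    have h0 := congrArg TriModHom.g (E.d_comp_d i j k)
    simp only [comp_g, zero_g] at h0
    show Submodule.Quotient.mk ((E.d j k).g ((E.d i j).g y)) = 0
    rw [← LinearMap.comp_apply, h0]
    rfl

end MoreConstructions
section HomModule
open CategoryTheory Limits
variable {R S M : Type} [CommRing R] [CommRing S]
  [AddCommGroup M] [Module R M] [Module S M] [SMulCommClass R S M]

variable (S M) in
/-- Scalar multiplication by `r : R` on `M`, as an `S`-linear map. -/
def rsmulM (r : R) : M →ₗ[S] M where
  toFun m := r • m
  map_add' := smul_add r
  map_smul' s m := (smul_comm r s m)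

/-- The right `R`-module structure on `Hom_S(M, Y)` coming from the `R`-action on `M`. -/
instance homRModule (Y : Type) [AddCommGroup Y] [Module S Y] : Module R (M →ₗ[S] Y) where
  smul r f := f ∘ₗ rsmulM S M r
  one_smul f := by
    apply LinearMap.ext; intro m
    show f ((1 : R) • m) = f m
    rw [one_smul]
  mul_smul r r' f := by
    apply LinearMap.ext; intro m
    show f ((r * r') • m) = f (r' • r • m)
    rw [mul_comm, mul_smul]
  smul_zero r := by apply LinearMap.ext; intro m; rfl
  smul_add r f g := by apply LinearMap.ext; intro m; rfl
  add_smul r r' f := by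
    apply LinearMap.ext; intro m
    show f ((r + r') • m) = f (r • m) + f (r' • m)
    rw [add_smul, map_add]
  zero_smul f := by
    apply LinearMap.ext; intro m
    show f ((0 : R) • m) = 0
    rw [zero_smul, map_zero]

@[simp] lemma homRModule_smul_apply {Y : Type} [AddCommGroup Y] [Module S Y]
    (r : R) (f : M →ₗ[S] Y) (m : M) : (r • f) m = f (r • m) := rfl

/-- Postcomposition `Hom_S(M, g)`, as an `R`-linear map. -/
def hT {Y Y' : Type} [AddCommGroup Y] [Module S Y] [AddCommGroup Y'] [Module S Y']
    (g : Y →ₗ[S] Y') : (M →ₗ[S] Y) →ₗ[R] (M →ₗ[S] Y') where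
  toFun f := g ∘ₗ f
  map_add' f f' := by apply LinearMap.ext; intro m; simp
  map_smul' r f := rfl

@[simp] lemma hT_zero {Y Y' : Type} [AddCommGroup Y] [Module S Y] [AddCommGroup Y']
    [Module S Y'] : hT (R := R) (M := M) (0 : Y →ₗ[S] Y') = 0 := by
  apply LinearMap.ext; intro f; apply LinearMap.ext; intro m; rfl

lemma hT_comp {Y Y' Y'' : Type} [AddCommGroup Y] [Module S Y] [AddCommGroup Y']
    [Module S Y'] [AddCommGroup Y''] [Module S Y''] (g : Y →ₗ[S] Y') (g' : Y' →ₗ[S] Y'') :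
    hT (R := R) (M := M) (g' ∘ₗ g) = (hT g') ∘ₗ (hT g) := by
  apply LinearMap.ext; intro f; apply LinearMap.ext; intro m; rfl

variable (R M) in
/-- The complex `Hom_S(M, E)` of `R`-modules obtained from a complex `E` of `S`-modules. -/
noncomputable def homComplex (E : ChainComplex (ModuleCat S) ℤ) :
    ChainComplex (ModuleCat R) ℤ where
  X i := ModuleCat.of R (M →ₗ[S] E.X i)
  d i j := ModuleCat.ofHom (hT (E.d i j).hom : _ →ₗ[R] _)
  shape i j h := by
    have h0 : (E.d i j).hom = 0 := by rw [E.shape i j h]; rfl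
    apply ModuleCat.hom_ext
    rw [ModuleCat.hom_ofHom, h0, hT_zero]; rfl
  d_comp_d' i j k _ _ := by
    have h0 : ((E.d j k).hom ∘ₗ (E.d i j).hom) = 0 := by
      rw [← ModuleCat.hom_comp, E.d_comp_d i j k]; rfl
    apply ModuleCat.hom_ext
    rw [ModuleCat.hom_comp, ModuleCat.hom_ofHom, ModuleCat.hom_ofHom, ← hT_comp, h0, hT_zero]
    rfl

variable (R S M) in
/-- Condition (3): `Hom_S(M, -)` takes acyclic complexes of injective `S`-modules to
acyclic complexes of `R`-modules. -/
def Cond3 : Prop :=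
  ∀ (E : ChainComplex (ModuleCat S) ℤ),
    (∀ i, Module.Injective S (E.X i)) → (∀ i, E.ExactAt i) →
    ∀ i, (homComplex R M E).ExactAt i

variable (R S M) in
/-- Condition (4): `Hom_S(M, I) ∈ ᗮGInj(R)` for every injective `S`-module `I`. -/
def Cond4 : Prop :=
  ∀ (I : Type) [AddCommGroup I] [Module S I], Module.Injective S I →
    ∀ (G : Type) [AddCommGroup G] [Module R G],
      ModGorensteinInjective R G → Ext1Vanishes R (M →ₗ[S] I) G

variable (S M) in
/-- The evaluation map `M ⊗_R Hom_S(M, Y) → Y` as an additive map. -/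
noncomputable def evMapAdd (Y : Type) [AddCommGroup Y] [Module S Y] :
    (M ⊗[R] (M →ₗ[S] Y)) →+ Y :=
  TensorProduct.liftAddHom
    (AddMonoidHom.mk' (fun m => AddMonoidHom.mk' (fun f : M →ₗ[S] Y => f m)
      (fun f g => rfl)) (fun m m' => by
        apply AddMonoidHom.ext; intro f; exact f.map_add m m'))
    (fun r m f => by show f (r • m) = (r • f) m; rfl)

lemma evMapAdd_smul {Y : Type} [AddCommGroup Y] [Module S Y] (s : S)
    (t : M ⊗[R] (M →ₗ[S] Y)) : evMapAdd S M Y (s • t) = s • evMapAdd S M Y t := by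
  induction t using TensorProduct.induction_on with
  | zero => simp
  | tmul m f =>
    rw [TensorProduct.smul_tmul']
    show (f : M →ₗ[S] Y) (s • m) = s • f m
    exact f.map_smul s m
  | add a b ha hb => simp only [map_add, smul_add, ha, hb]

variable (S M) in
/-- The evaluation map `M ⊗_R Hom_S(M, Y) → Y`. -/
noncomputable def evMap (Y : Type) [AddCommGroup Y] [Module S Y] :
    (M ⊗[R] (M →ₗ[S] Y)) →ₗ[S] Y where
  toFun := evMapAdd S M Y
  map_add' := map_add _
  map_smul' := evMapAdd_smul

variable (R S M) in
/-- The Γ-module `e²_ρ(Y) = (Hom_S(M,Y), Y)_1`. -/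
noncomputable def e2rhoObj (Y : Type) [AddCommGroup Y] [Module S Y] : TriMod R S M :=
  ⟨M →ₗ[S] Y, Y, evMap S M Y⟩

end HomModule
section Functors
open CategoryTheory Limits
variable (R S M : Type) [CommRing R] [CommRing S]
  [AddCommGroup M] [Module R M] [Module S M] [SMulCommClass R S M]

/-- The evaluation functor `e¹ : Mod Γ → Mod R`, `(X,Y)_φ ↦ X`. -/
noncomputable def ev1 : TriMod R S M ⥤ ModuleCat R where
  obj A := ModuleCat.of R A.X
  map u := ModuleCat.ofHom u.f
  map_id A := rfl
  map_comp u v := rfl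

/-- The functor `e¹_λ : Mod R → Mod Γ`, `X ↦ (X, M ⊗ X)_1`. -/
noncomputable def e1fun : ModuleCat R ⥤ TriMod R S M where
  obj X := e1obj R S M X
  map {X X'} f := ⟨f.hom, lT f.hom, by
    show lT (M := M) (S := S) f.hom ∘ₗ LinearMap.id = LinearMap.id ∘ₗ _
    simp; rfl⟩
  map_id X := by
    apply TriModHom.ext
    · rfl
    · exact lT_id
  map_comp {X X' X''} f g := by
    apply TriModHom.ext <;> dsimp only [comp_f, comp_g]
    · rfl
    · show lT (M := M) (S := S) (g.hom ∘ₗ f.hom) = _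
      rw [lT_comp]; rfl

/-- The evaluation functor `e² : Mod Γ → Mod S`, `(X,Y)_φ ↦ Y`. -/
noncomputable def ev2 : TriMod R S M ⥤ ModuleCat S where
  obj A := ModuleCat.of S A.Y
  map u := ModuleCat.ofHom u.g
  map_id A := rfl
  map_comp u v := rfl

/-- The functor `e²_λ : Mod S → Mod Γ`, `Y ↦ (0, Y)_0`. -/
noncomputable def e2fun : ModuleCat S ⥤ TriMod R S M where
  obj Y := e2obj R S M Y
  map {Y Y'} g := ⟨LinearMap.id, g.hom, by
    show g.hom ∘ₗ (0 : (M ⊗[R] PUnit) →ₗ[S] Y) = _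
    simp [e2obj]; rfl⟩
  map_id Y := by apply TriModHom.ext <;> rfl
  map_comp f g := by
    apply TriModHom.ext
    · show LinearMap.id ∘ₗ LinearMap.id = (LinearMap.id : PUnit →ₗ[R] PUnit)
      simp
    · rfl

/-- The functor `e²_ρ : Mod S → Mod Γ`, `Y ↦ (Hom_S(M,Y), Y)_1`. -/
noncomputable def e2rhoFun : ModuleCat S ⥤ TriMod R S M where
  obj Y := e2rhoObj R S M Y
  map {Y Y'} g := ⟨hT g.hom, g.hom, by
    apply LinearMap.ext; intro t
    induction t using TensorProduct.induction_on with
    | zero => simp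
    | tmul m f => rfl
    | add a b ha hb => simp only [map_add, ha, hb]⟩
  map_id Y := by
    apply TriModHom.ext <;> dsimp only [id_f, id_g]
    · apply LinearMap.ext; intro f; apply LinearMap.ext; intro m; rfl
    · rfl
  map_comp f g := by
    apply TriModHom.ext <;> dsimp only [comp_f, comp_g]
    · apply LinearMap.ext; intro u; apply LinearMap.ext; intro m; rfl
    · rfl

end Functors

section Props
open CategoryTheory Limits
variable {R S M : Type} [CommRing R] [CommRing S]
  [AddCommGroup M] [Module R M] [Module S M] [SMulCommClass R S M]

/-- `Ext¹_Γ(P, A) = 0`: every extension `0 → A → D → P → 0` of Γ-modules splits. -/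
def TriExt1Vanishes (P A : TriMod R S M) : Prop :=
  ∀ (D : TriMod R S M) (i : A ⟶ D) (p : D ⟶ P) (w : i ≫ p = 0), Epi p →
    Nonempty (IsLimit (KernelFork.ofι i w)) → ∃ s : P ⟶ D, s ≫ p = 𝟙 P

/-- `A ∈ GProj(Γ)ᗮ`. -/
def TriMemGProjPerp (A : TriMod R S M) : Prop :=
  ∀ G : TriMod R S M, IsGorensteinProjective G → TriExt1Vanishes G A

/-- `A ∈ ᗮGInj(Γ)`. -/
def TriMemPerpGInj (A : TriMod R S M) : Prop :=
  ∀ G : TriMod R S M, IsGorensteinInjective G → TriExt1Vanishes A G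

variable (R S M) in
/-- `Γ` is virtually Gorenstein: `GProj(Γ)ᗮ = ᗮGInj(Γ)`. -/
def TriVirtuallyGorenstein : Prop :=
  ∀ A : TriMod R S M, TriMemGProjPerp A ↔ TriMemPerpGInj A

/-- A ring `A` is virtually Gorenstein: `GProj(A)ᗮ = ᗮGInj(A)`. -/
def RingVirtuallyGorenstein (A : Type) [Ring A] : Prop :=
  ∀ (N : Type) [AddCommGroup N] [Module A N],
    (∀ (G : Type) [AddCommGroup G] [Module A G],
        ModGorensteinProjective A G → Ext1Vanishes A G N) ↔
    (∀ (G : Type) [AddCommGroup G] [Module A G],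
        ModGorensteinInjective A G → Ext1Vanishes A N G)

/-- An object of a category with zero morphisms is indecomposable: it is nonzero and its
only idempotent endomorphisms are `0` and the identity. -/
def Indec {C : Type u} [Category.{v} C] [Limits.HasZeroMorphisms C] (A : C) : Prop :=
  ¬ IsZero A ∧ ∀ e : A ⟶ A, e ≫ e = e → e = 0 ∨ e = 𝟙 A

/-- A Γ-module is finitely generated iff both components are. -/
def TriFG (A : TriMod R S M) : Prop := Module.Finite R A.X ∧ Module.Finite S A.Y

variable (R S M) in
/-- `Γ` is of finite Cohen-Macaulay type. -/
def TriCMFinite : Prop :=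
  ∃ (n : ℕ) (rep : Fin n → TriMod R S M),
    ∀ A : TriMod R S M, TriFG A → Indec A → IsGorensteinProjective A →
      ∃ i : Fin n, Nonempty (A ≅ rep i)

variable (R S M) in
/-- `Γ` is Cohen-Macaulay free. -/
def TriCMFree : Prop :=
  ∀ A : TriMod R S M, TriFG A → IsGorensteinProjective A → Projective A

/-- A ring is of finite Cohen-Macaulay type: up to isomorphism, only finitely many
indecomposable finitely generated Gorenstein projective modules. -/
def RingCMFinite (A : Type) [Ring A] : Prop :=
  ∃ (n : ℕ) (rep : Fin n → ModuleCat.{0} A),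
    ∀ N : ModuleCat.{0} A, Module.Finite A N → Indec N → IsGorensteinProjective N →
      ∃ i : Fin n, Nonempty (N ≅ rep i)

/-- A ring is Cohen-Macaulay free: every finitely generated Gorenstein projective module
is projective. -/
def RingCMFree (A : Type) [Ring A] : Prop :=
  ∀ (N : Type) [AddCommGroup N] [Module A N],
    Module.Finite A N → ModGorensteinProjective A N → Module.Projective A N

end Props


/-!
By hypothesis `e¹_λ(P) = (P, M ⊗ P)_1` is Gorenstein projective, so it is the kernel of
`F₀ → F₋₁` for a totally acyclic complex `F` of projective Γ-modules. The next syzygy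
`K = ker (F₁ → F₀)` is Gorenstein projective too, so its structure map
`M ⊗ K.X → K.Y ⊆ F₁.Y` is injective, hence so is `M ⊗ K.X → M ⊗ F₁.X`. The first components
of `F` form an acyclic complex of projective `R`-modules, so `⋯ → F₂.X → F₁.X` is a projective
resolution of `P` with first syzygy `K.X`, and `Tor₁^R(M, P) = ker (M ⊗ K.X → M ⊗ F₁.X) = 0`.
-/

open Limits

section GorensteinProjective

variable {C : Type u} [Category.{v} C] [HasZeroMorphisms C]

lemma CategoryTheory.Limits.IsZero.isGorensteinProjective {Z : C} (hZ : IsZero Z) :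
    IsGorensteinProjective Z :=
  ⟨{ X := fun _ => Z, d := fun _ _ => 0 },
    ⟨fun _ => hZ.projective, fun _ => ShortComplex.exact_of_isZero_X₂ _ hZ,
      fun _ _ _ _ _ => ⟨0, hZ.eq_of_src _ _⟩⟩,
    𝟙 Z, hZ.eq_of_src _ _, ⟨KernelFork.IsLimit.ofId _ (hZ.eq_of_src _ _)⟩⟩

def ChainComplex.shiftDown (E : ChainComplex C ℤ) : ChainComplex C ℤ where
  X i := E.X (i + 1)
  d i j := E.d (i + 1) (j + 1)
  shape i j h := E.shape _ _ (by simp only [ComplexShape.down_Rel] at h ⊢; omega)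

lemma HomologicalComplex.ExactAt.shiftDown {E : ChainComplex C ℤ} {i : ℤ}
    (h : E.ExactAt (i + 1)) : E.shiftDown.ExactAt i := by
  rw [HomologicalComplex.exactAt_iff' _ (i + 1) i (i - 1) (by simp) (by simp)]
  rwa [HomologicalComplex.exactAt_iff' _ (i + 1 + 1) (i + 1) (i - 1 + 1) (by simp)
    (by simp)] at h

variable {F : ChainComplex C ℤ}

lemma IsTotallyAcyclic.shiftDown (hF : IsTotallyAcyclic F) : IsTotallyAcyclic F.shiftDown := by
  obtain ⟨hproj, hexact, hlift⟩ := hF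
  refine ⟨fun i => hproj (i + 1), fun i => (hexact (i + 1)).shiftDown, fun P hP i g hg => ?_⟩
  obtain ⟨h, hh⟩ := hlift P hP (i + 1) g hg
  have key : ∀ j, i + 1 - 1 = j → ∃ h : F.X j ⟶ P, F.d (i + 1) j ≫ h = g := by
    rintro j rfl
    exact ⟨h, hh⟩
  exact key (i - 1 + 1) (by omega)

lemma IsTotallyAcyclic.isGorensteinProjective_of_isLimit (hF : IsTotallyAcyclic F) {K : C}
    (ι : K ⟶ F.X 1) (w : ι ≫ F.d 1 0 = 0) (hι : IsLimit (KernelFork.ofι ι w)) :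
    IsGorensteinProjective K :=
  ⟨_, hF.shiftDown, ι, w, ⟨hι⟩⟩

end GorensteinProjective

noncomputable def ProjectiveResolution.ofExact {C : Type u} [Category.{v} C] [Abelian C] {Z : C}
    (K : ChainComplex C ℕ) (π : K.X 0 ⟶ Z) (w : K.d 1 0 ≫ π = 0)
    (hπ : (ShortComplex.mk _ _ w).Exact) (hepi : Epi π) (hK : ∀ n, K.ExactAt (n + 1))
    (hproj : ∀ n, Projective (K.X n)) : ProjectiveResolution Z where
  complex := K
  projective := hproj
  π := (K.toSingle₀Equiv Z).symm ⟨π, w⟩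
  quasiIso := ⟨fun n => by
    cases n
    · rw [ChainComplex.quasiIsoAt₀_iff,
        ShortComplex.quasiIso_iff_of_zeros' _ (K.shape _ _ (by simp)) rfl rfl]
      refine (ShortComplex.exact_and_epi_g_iff_of_iso ?_).1 ⟨hπ, hepi⟩
      exact ShortComplex.isoMk (Iso.refl _) (Iso.refl _) (Iso.refl _)
        ((Category.id_comp _).trans (Category.comp_id _).symm)
        ((Category.id_comp _).trans
          ((ChainComplex.toSingle₀Equiv_symm_apply_f_zero π w).trans (Category.comp_id π).symm))
    · rw [quasiIsoAt_iff_exactAt' _ _ (ChainComplex.exactAt_succ_single_obj _ _)]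
      exact hK _⟩

section Tor

variable {R : Type} [CommRing R]

lemma Function.Exact.codRestrict {N' N X : Type} [AddCommGroup N'] [Module R N'] [AddCommGroup N]
    [Module R N] [AddCommGroup X] [Module R X] {f : N' →ₗ[R] N} {g : N →ₗ[R] X}
    (hfg : Function.Exact f g) (p : Submodule R X) (h : ∀ x, g x ∈ p) :
    Function.Exact f (g.codRestrict p h) :=
  p.injective_subtype.comp_exact_iff_exact.1 (by rwa [LinearMap.subtype_comp_codRestrict])

variable (M : Type) [AddCommGroup M] [Module R M]

lemma lTensor_exact_of_injective_lTensor {N' N X : Type} [AddCommGroup N'] [Module R N']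
    [AddCommGroup N] [Module R N] [AddCommGroup X] [Module R X] {Z : Submodule R X}
    {f : N' →ₗ[R] N} {g : N →ₗ[R] Z} (hfg : Function.Exact f g) (hg : Function.Surjective g)
    (hZ : Function.Injective (Z.subtype.lTensor M)) :
    Function.Exact (f.lTensor M) ((Z.subtype ∘ₗ g).lTensor M) := by
  rw [LinearMap.lTensor_comp]
  exact (lTensor_exact M hfg hg).comp_injective _ hZ (map_zero _)

lemma isZero_tor_one_of_injective_lTensor {P : ModuleCat.{0} R} (Q : ProjectiveResolution P)
    (hZ : Function.Injective ((LinearMap.ker (Q.π.f 0).hom).subtype.lTensor M)) :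
    IsZero (((Tor (ModuleCat.{0} R) 1).obj (ModuleCat.of R M)).obj P) := by
  have hπ : Function.Exact (Q.complex.d 1 0).hom (Q.π.f 0).hom :=
    (ShortComplex.ShortExact.moduleCat_exact_iff_function_exact _).1
      (ShortComplex.exact_of_g_is_cokernel (.mk _ _ Q.complex_d_comp_π_f_zero)
        Q.isColimitCokernelCofork)
  have hd : Function.Exact (Q.complex.d 2 1).hom (Q.complex.d 1 0).hom :=
    (ShortComplex.ShortExact.moduleCat_exact_iff_function_exact _).1 (Q.exact_succ 0)
  have hc : Function.Surjective ((Q.complex.d 1 0).hom.codRestrict (LinearMap.ker (Q.π.f 0).hom)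
      fun x => (hπ _).2 ⟨x, rfl⟩) := by
    rintro ⟨y, hy⟩
    obtain ⟨x, rfl⟩ := (hπ y).1 hy
    exact ⟨x, rfl⟩
  have hex := lTensor_exact_of_injective_lTensor M (hd.codRestrict _ _) hc hZ
  refine IsZero.of_iso ?_ (Q.isoLeftDerivedObj _ 1)
  refine (HomologicalComplex.exactAt_iff_isZero_homology _ _).1 ?_
  rw [HomologicalComplex.exactAt_iff' _ 2 1 0 (by simp) (by simp),
    ShortComplex.ShortExact.moduleCat_exact_iff_function_exact]
  exact hex

lemma ChainComplex.exact_hom_d_of_exactAt {E : ChainComplex (ModuleCat.{0} R) ℤ} {j : ℤ}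
    (h : E.ExactAt j) : Function.Exact (E.d (j + 1) j).hom (E.d j (j - 1)).hom :=
  (ShortComplex.ShortExact.moduleCat_exact_iff_function_exact _).1
    ((HomologicalComplex.exactAt_iff' E _ _ _ (by simp) (by simp)).1 h)

def ComplexShape.embeddingDownNatSucc :
    (ComplexShape.down ℕ).Embedding (ComplexShape.down ℤ) where
  f n := n + 1
  injective_f _ _ h := by simpa using h
  rel h := by simp at h ⊢; omega

instance : ComplexShape.embeddingDownNatSucc.IsRelIff where
  rel' _ _ h := by simp [ComplexShape.embeddingDownNatSucc] at h ⊢; omega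

noncomputable def projectiveResolutionKer (E : ChainComplex (ModuleCat.{0} R) ℤ)
    (hproj : ∀ i, Projective (E.X i)) (hexact : ∀ i, E.ExactAt i) :
    ProjectiveResolution (ModuleCat.of R (LinearMap.ker (E.d 0 (-1)).hom)) :=
  have h₀ : Function.Exact (E.d 1 0).hom (E.d 0 (-1)).hom :=
    ChainComplex.exact_hom_d_of_exactAt (j := 0) (hexact 0)
  have h₁ : Function.Exact (E.d 2 1).hom (E.d 1 0).hom :=
    ChainComplex.exact_hom_d_of_exactAt (j := 1) (hexact 1)
  ProjectiveResolution.ofExact (E.restriction ComplexShape.embeddingDownNatSucc)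
    (ModuleCat.ofHom ((E.d 1 0).hom.codRestrict (LinearMap.ker (E.d 0 (-1)).hom)
      fun x => (h₀ _).2 ⟨x, rfl⟩))
    (by ext x; exact (h₁ _).2 ⟨x, rfl⟩)
    ((ShortComplex.ShortExact.moduleCat_exact_iff_function_exact _).2 (h₁.codRestrict _ _))
    ((ModuleCat.epi_iff_surjective _).2 <| by
      rintro ⟨y, hy⟩
      obtain ⟨x, rfl⟩ := (h₀ y).1 hy
      exact ⟨x, rfl⟩)
    (fun n => by
      rw [HomologicalComplex.exactAt_iff' _ (n + 2) (n + 1) n (by simp) (by simp)]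
      exact (HomologicalComplex.exactAt_iff' E ((n : ℤ) + 2 + 1) (n + 2) (n + 1) (by simp)
        (by simp; omega)).1 (hexact _))
    (fun _ => hproj _)

lemma isZero_tor_one_ker_of_injective_lTensor (E : ChainComplex (ModuleCat.{0} R) ℤ)
    (hproj : ∀ i, Projective (E.X i)) (hexact : ∀ i, E.ExactAt i)
    (hZ : Function.Injective ((LinearMap.ker (E.d 1 0).hom).subtype.lTensor M)) :
    IsZero (((Tor (ModuleCat.{0} R) 1).obj (ModuleCat.of R M)).obj
      (ModuleCat.of R (LinearMap.ker (E.d 0 (-1)).hom))) := by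
  refine isZero_tor_one_of_injective_lTensor M (projectiveResolutionKer E hproj hexact) ?_
  -- The kernel of the augmentation is a submodule of `(E.restriction _).X 0`, which is `E.X 1`
  -- only up to unfolding, so `rw` cannot move between the two.
  have key : ∀ p : Submodule R (E.X 1), p = LinearMap.ker (E.d 1 0).hom →
      Function.Injective (p.subtype.lTensor M) := by
    rintro p rfl
    exact hZ
  exact key _ (LinearMap.ker_codRestrict _ _ _)

end Tor

section TriangularModules

variable {R S M : Type} [CommRing R] [CommRing S]
  [AddCommGroup M] [Module R M] [Module S M] [SMulCommClass R S M]

lemma TriModHom.comm_apply {A B : TriMod R S M} (u : A ⟶ B) (t : M ⊗[R] A.X) :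
    u.g (A.phi t) = B.phi (lT (S := S) u.f t) :=
  LinearMap.congr_fun u.comm t

lemma TriMod.epi_of_surjective {A B : TriMod R S M} (u : A ⟶ B) (hf : Function.Surjective u.f)
    (hg : Function.Surjective u.g) : Epi u :=
  ⟨fun _ _ h => TriModHom.ext ((LinearMap.cancel_right hf).1 (congrArg TriModHom.f h))
    ((LinearMap.cancel_right hg).1 (congrArg TriModHom.g h))⟩

lemma e1obj_hom_ext {X : Type} [AddCommGroup X] [Module R X] {B : TriMod R S M}
    {a b : e1obj R S M X ⟶ B} (h : a.f = b.f) : a = b := by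
  have ha : a.g = B.phi ∘ₗ lT a.f := a.comm
  have hb : b.g = B.phi ∘ₗ lT b.f := b.comm
  exact TriModHom.ext h (by rw [ha, hb, h])

variable (R S M) in
/-- The right adjoint `e¹_ρ` of `e¹`, `X ↦ (X, 0)_0`. -/
noncomputable abbrev e1rhoObj (X : Type) [AddCommGroup X] [Module R X] : TriMod R S M :=
  ⟨X, PUnit, 0⟩

noncomputable def toE1rho (A : TriMod R S M) {X : Type} [AddCommGroup X] [Module R X]
    (f : A.X →ₗ[R] X) : A ⟶ e1rhoObj R S M X :=
  ⟨f, 0, LinearMap.ext fun _ => rfl⟩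

lemma TriMod.surjective_f_of_isColimit {A B : TriMod R S M} {u : A ⟶ B} {c : CokernelCofork u}
    (hc : IsColimit c) (hz : IsZero c.pt) : Function.Surjective u.f := by
  have h : toE1rho B (LinearMap.range u.f).mkQ = 0 := by
    obtain ⟨a, ha⟩ := CokernelCofork.IsColimit.desc' hc (toE1rho B (LinearMap.range u.f).mkQ)
      (TriModHom.ext (LinearMap.ext fun x => (Submodule.Quotient.mk_eq_zero _).2 ⟨x, rfl⟩)
        (LinearMap.ext fun _ => rfl))
    rw [← ha, hz.eq_of_src a 0, comp_zero]
  intro y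
  exact (Submodule.Quotient.mk_eq_zero _).1 (LinearMap.congr_fun (congrArg TriModHom.f h) y)

lemma TriMod.projective_X_of_projective {A : TriMod R S M} (hA : Projective A) :
    Module.Projective R A.X := by
  classical
  let p : (A.X →₀ R) →ₗ[R] A.X := Finsupp.linearCombination R id
  have : Epi (toE1rho (e1rhoObj R S M (A.X →₀ R)) p) :=
    TriMod.epi_of_surjective _ (fun x : A.X => ⟨Finsupp.single x 1, by simp [p, toE1rho]⟩)
      (fun _ => ⟨PUnit.unit, rfl⟩)
  obtain ⟨l, hl⟩ := hA.factors (toE1rho A LinearMap.id) (toE1rho (e1rhoObj R S M (A.X →₀ R)) p)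
  exact Module.Projective.of_split (l.f : A.X →ₗ[R] A.X →₀ R) p (congrArg TriModHom.f hl)

/-- `e¹_λ(R)` corepresents `A ↦ A.X`; this is the morphism corresponding to `x`. -/
noncomputable def elemHom (B : TriMod R S M) (x : B.X) : e1obj R S M R ⟶ B :=
  ⟨LinearMap.toSpanSingleton R B.X x, B.phi ∘ₗ lT (LinearMap.toSpanSingleton R B.X x), rfl⟩

lemma elemHom_f_one (B : TriMod R S M) (x : B.X) : (elemHom B x).f (1 : R) = x :=
  one_smul R x

lemma elemHom_comp {B C : TriMod R S M} (x : B.X) (u : B ⟶ C) :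
    elemHom B x ≫ u = elemHom C (u.f x) :=
  e1obj_hom_ext (LinearMap.ext fun r => u.f.map_smul r x)

lemma elemHom_zero (B : TriMod R S M) : elemHom B 0 = 0 :=
  e1obj_hom_ext (LinearMap.ext fun r : R => smul_zero r)

lemma CategoryTheory.ShortComplex.Exact.exact_f {T : ShortComplex (TriMod R S M)}
    (hT : T.Exact) : Function.Exact T.f.f T.g.f := by
  intro x
  refine ⟨fun hx => ?_, ?_⟩
  · obtain ⟨hd, hz⟩ := hT.condition
    let h := hd.left
    obtain ⟨l, hl⟩ := KernelFork.IsLimit.lift' h.hi (elemHom _ x)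
      (by rw [elemHom_comp, hx, elemHom_zero])
    obtain ⟨a, ha⟩ := TriMod.surjective_f_of_isColimit h.hπ hz (l.f (1 : R))
    refine ⟨a, ?_⟩
    calc T.f.f a = h.i.f (h.f'.f a) := (LinearMap.congr_fun (congrArg TriModHom.f h.f'_i) a).symm
      _ = h.i.f (l.f (1 : R)) := congrArg h.i.f ha
      _ = x := (LinearMap.congr_fun (congrArg TriModHom.f hl) (1 : R)).trans (elemHom_f_one _ x)
  · rintro ⟨a, rfl⟩
    exact LinearMap.congr_fun (congrArg TriModHom.f T.zero) a

lemma compA_exactAt {E : ChainComplex (TriMod R S M) ℤ} {i : ℤ} (h : E.ExactAt i) :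
    (compA R S M E).ExactAt i := by
  rw [HomologicalComplex.exactAt_iff, ShortComplex.ShortExact.moduleCat_exact_iff_function_exact]
  exact ((HomologicalComplex.exactAt_iff _ _).1 h).exact_f

variable {A B : TriMod R S M} (u : A ⟶ B)

noncomputable def kerObj : TriMod R S M where
  X := LinearMap.ker u.f
  Y := LinearMap.ker u.g
  phi := (A.phi ∘ₗ lT (LinearMap.ker u.f).subtype).codRestrict _ fun t => by
    rw [LinearMap.mem_ker, LinearMap.comp_apply, u.comm_apply, ← LinearMap.comp_apply (lT u.f),
      ← lT_comp, LinearMap.comp_ker_subtype, lT_zero, LinearMap.zero_apply, map_zero]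

noncomputable def kerι : kerObj u ⟶ A :=
  ⟨(LinearMap.ker u.f).subtype, (LinearMap.ker u.g).subtype, rfl⟩

lemma kerι_comp : kerι u ≫ u = 0 :=
  TriModHom.ext (LinearMap.comp_ker_subtype u.f) (LinearMap.comp_ker_subtype u.g)

variable {u} in
noncomputable def kerLift {W : TriMod R S M} (t : W ⟶ A) (ht : t ≫ u = 0) : W ⟶ kerObj u :=
  let f := t.f.codRestrict (LinearMap.ker u.f) fun x =>
    LinearMap.congr_fun (congrArg TriModHom.f ht) x
  ⟨f, t.g.codRestrict _ fun y => LinearMap.congr_fun (congrArg TriModHom.g ht) y,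
    LinearMap.ext fun z => Subtype.ext ((t.comm_apply z).trans
      (congrArg A.phi (LinearMap.congr_fun (lT_comp f (LinearMap.ker u.f).subtype) z)))⟩

noncomputable def kerIsLimit : IsLimit (KernelFork.ofι (kerι u) (kerι_comp u)) :=
  KernelFork.IsLimit.ofι _ _ (fun t ht => kerLift t ht) (fun _ _ => rfl)
    (fun _ _ _ hm => TriModHom.ext
      (LinearMap.ext fun x => Subtype.ext (LinearMap.congr_fun (congrArg TriModHom.f hm) x))
      (LinearMap.ext fun y => Subtype.ext (LinearMap.congr_fun (congrArg TriModHom.g hm) y)))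

lemma injective_lTensor_of_injective_kerObj_phi (h : Function.Injective (kerObj u).phi) :
    Function.Injective ((LinearMap.ker u.f).subtype.lTensor M) :=
  fun _ _ hab => h (Subtype.ext (congrArg A.phi hab))

end TriangularModules

section Statement
variable {R S M : Type} [CommRing R] [CommRing S]
  [AddCommGroup M] [Module R M] [Module S M] [SMulCommClass R S M]

/-- If Gorenstein projective Γ-modules are exactly the `(X,Y)_φ` with `X` Gorenstein
projective over `R`, `Coker φ` Gorenstein projective over `S` and `φ` mono, then
`Tor₁^R(M, P) = 0` for every Gorenstein projective `R`-module `P`. -/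
theorem tor_vanishes_of_gorensteinProjective_classification
    (H : ∀ A : TriMod R S M,
      IsGorensteinProjective A ↔
        ModGorensteinProjective R A.X ∧
          ModGorensteinProjective S (A.Y ⧸ LinearMap.range A.phi) ∧
          Function.Injective A.phi)
    (P : ModuleCat.{0} R) (hP : IsGorensteinProjective P) :
    Limits.IsZero (((Tor (ModuleCat.{0} R) 1).obj (ModuleCat.of R M)).obj P) := by
  have : Subsingleton ((M ⊗[R] P) ⧸ LinearMap.range (e1obj R S M P).phi) :=
    Submodule.Quotient.subsingleton_iff.2 LinearMap.range_id
  obtain ⟨F, hF, ι, w, ⟨hι⟩⟩ : IsGorensteinProjective (e1obj R S M P) :=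
    (H _).2 ⟨hP, (ModuleCat.isZero_of_subsingleton _).isGorensteinProjective, fun _ _ h => h⟩
  have hsyz : Function.Injective (kerObj (F.d 1 0)).phi :=
    ((H _).1 (hF.isGorensteinProjective_of_isLimit _ _ (kerIsLimit _))).2.2
  refine IsZero.of_iso ?_ (((Tor _ 1).obj _).mapIso
    ((ev1 R S M).mapIso (hι.conePointUniqueUpToIso (kerIsLimit _))))
  exact isZero_tor_one_ker_of_injective_lTensor M (compA R S M F)
    (fun i => (IsProjective.iff_projective _).1 (TriMod.projective_X_of_projective (hF.1 i)))
    (fun i => compA_exactAt (hF.2.1 i)) (injective_lTensor_of_injective_kerObj_phi _ hsyz)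

end Statement
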